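/- arXiv:1707.07827 — 3 statements merged into one kernel-verified Lean document; each statement's English description precedes it below -/
import Mathlib

section
/- Let $r>0$ and $\gamma,\beta\in L^1([-r,0],\mathbb{R})$ with $\|\gamma\|_{L^1}+\|\beta\|_{L^1}<1$, and define $n(\lambda)=1-\int_{-r}^0\gamma(\theta)e^{\lambda\theta}\,d\theta+\int_{-r}^0\beta(\theta)e^{\lambda\theta}\,d\theta$. Then there exists $\mu>0$ such that every $\lambda\in\mathbb{C}$ with $n(\lambda)=0$ satisfies $\mathrm{Re}\,\lambda\le-\mu$. Equivalently, there is no sequence $(\lambda_n)$ of zeros of $n$ with $\mathrm{Re}\,\lambda_n\to 0^-$ or $\mathrm{Re}\,\lambda_n\ge 0$. -/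
open MeasureTheory Set

/-- under `‖γ‖_{L¹} + ‖β‖_{L¹} < 1`, the zeros of
`n(λ) = 1 - ∫ γ e^{λθ} + ∫ β e^{λθ}` have real parts uniformly bounded away
from `0`: there is `μ > 0` with `Re λ ≤ -μ` for every zero `λ`. -/
theorem stmt_6
    (r : ℝ) (hr : 0 < r)
    (γ β : ℝ → ℝ)
    (hγ : IntegrableOn γ (Icc (-r) 0))
    (hβ : IntegrableOn β (Icc (-r) 0))
    (hsmall : (∫ θ in (-r)..(0:ℝ), |γ θ|) + ∫ θ in (-r)..(0:ℝ), |β θ| < 1) :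
    ∃ μ : ℝ, 0 < μ ∧ ∀ lam : ℂ,
      (1 - (∫ θ in (-r)..(0:ℝ), (γ θ : ℂ) * Complex.exp (lam * θ))
        + ∫ θ in (-r)..(0:ℝ), (β θ : ℂ) * Complex.exp (lam * θ)) = 0 →
      lam.re ≤ -μ := by
  have hr0 : (-r : ℝ) ≤ 0 := by linarith
  set A : ℝ := ∫ θ in (-r)..(0:ℝ), |γ θ| with hA
  set B : ℝ := ∫ θ in (-r)..(0:ℝ), |β θ| with hB
  have hA0 : 0 ≤ A := intervalIntegral.integral_nonneg hr0 (fun x _ => abs_nonneg _)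
  have hB0 : 0 ≤ B := intervalIntegral.integral_nonneg hr0 (fun x _ => abs_nonneg _)
  set S : ℝ := A + B with hSdef
  have hS0 : 0 ≤ S := by positivity
  set T : ℝ := max S (1/2) with hTdef
  have hT0 : 0 < T := lt_of_lt_of_le (by norm_num) (le_max_right _ _)
  have hT1 : T < 1 := max_lt hsmall (by norm_num)
  have hST : S ≤ T := le_max_left _ _
  have hlogT : Real.log T < 0 := Real.log_neg hT0 hT1
  have hμpos : 0 < -Real.log T / (2 * r) := div_pos (by linarith) (by linarith)
  refine ⟨-Real.log T / (2 * r), hμpos, fun lam hlam => ?_⟩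
  by_contra hre
  push_neg at hre
  set μ : ℝ := -Real.log T / (2 * r) with hμ
  have hμr : μ * r = -Real.log T / 2 := by
    rw [hμ, div_mul_eq_mul_div, div_eq_div_iff (by positivity) (by norm_num)]
    ring
  -- key exponential bound
  have key : S * Real.exp (μ * r) < 1 := by
    rw [hμr]
    calc S * Real.exp (-Real.log T / 2)
        ≤ Real.exp (Real.log T) * Real.exp (-Real.log T / 2) := by
          apply mul_le_mul_of_nonneg_right _ (Real.exp_pos _).le
          rw [Real.exp_log hT0]; exact hST
      _ = Real.exp (Real.log T / 2) := by rw [← Real.exp_add]; ring_nf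
      _ < 1 := Real.exp_lt_one_iff.mpr (by linarith)
  -- bound each integral
  have bound : ∀ (f : ℝ → ℝ), IntegrableOn f (Icc (-r) 0) →
      ‖∫ θ in (-r)..(0:ℝ), (f θ : ℂ) * Complex.exp (lam * θ)‖ ≤
      (∫ θ in (-r)..(0:ℝ), |f θ|) * Real.exp (μ * r) := by
    intro f hf
    have hg : IntervalIntegrable (fun θ => |f θ| * Real.exp (μ * r)) volume (-r) 0 := by
      apply IntegrableOn.intervalIntegrable
      rw [uIcc_of_le hr0]
      exact hf.abs.mul_const _
    have hae : ∀ᵐ t ∂(volume.restrict (Set.uIoc (-r) (0:ℝ))),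
        ‖(f t : ℂ) * Complex.exp (lam * t)‖ ≤ |f t| * Real.exp (μ * r) := by
      filter_upwards [ae_restrict_mem measurableSet_uIoc] with t ht
      rw [uIoc_of_le hr0] at ht
      rw [norm_mul, Complex.norm_exp,
        Complex.norm_real, Real.norm_eq_abs]
      apply mul_le_mul_of_nonneg_left _ (abs_nonneg _)
      apply Real.exp_le_exp.mpr
      have h1 : (lam * (t:ℂ)).re = lam.re * t := by
        simp [Complex.mul_re]
      rw [h1]
      nlinarith [mul_le_mul_of_nonpos_right hre.le ht.2,
        mul_le_mul_of_nonneg_left (by linarith [ht.1] : -t ≤ r) (le_of_lt (show 0 < μ from hμpos))]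
    have := intervalIntegral.norm_integral_le_abs_of_norm_le hae hg
    calc ‖∫ θ in (-r)..(0:ℝ), (f θ : ℂ) * Complex.exp (lam * θ)‖
        ≤ |∫ θ in (-r)..(0:ℝ), |f θ| * Real.exp (μ * r)| := this
      _ = (∫ θ in (-r)..(0:ℝ), |f θ|) * Real.exp (μ * r) := by
          rw [intervalIntegral.integral_mul_const, abs_of_nonneg]
          exact mul_nonneg (intervalIntegral.integral_nonneg hr0 fun x _ => abs_nonneg _)
            (Real.exp_pos _).le
  have b1 := bound γ hγ
  have b2 := bound β hβ
  have h1 : (1:ℂ) = (∫ θ in (-r)..(0:ℝ), (γ θ : ℂ) * Complex.exp (lam * θ))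
      - ∫ θ in (-r)..(0:ℝ), (β θ : ℂ) * Complex.exp (lam * θ) := by
    have := hlam
    ring_nf at this ⊢
    linear_combination this
  have : (1:ℝ) ≤ S * Real.exp (μ * r) := by
    calc (1:ℝ) = ‖(1:ℂ)‖ := by simp
      _ ≤ ‖∫ θ in (-r)..(0:ℝ), (γ θ : ℂ) * Complex.exp (lam * θ)‖
          + ‖∫ θ in (-r)..(0:ℝ), (β θ : ℂ) * Complex.exp (lam * θ)‖ := by
          rw [h1]; exact norm_sub_le _ _
      _ ≤ A * Real.exp (μ * r) + B * Real.exp (μ * r) := add_le_add b1 b2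
      _ = S * Real.exp (μ * r) := by rw [hSdef]; ring
  linarith
end

section
/- Let $r>0$, $c_0>0$, $\gamma,\beta\in L^1([-r,0],\mathbb{R})$ with $\|\gamma\|_{L^1}+\|\beta\|_{L^1}<1$. Define $m(\lambda)=\lambda\big(1-\int_{-r}^0\gamma(\theta)e^{\lambda\theta}d\theta\big)$ and $n(\lambda)=1-\int_{-r}^0\gamma(\theta)e^{\lambda\theta}d\theta+\int_{-r}^0\beta(\theta)e^{\lambda\theta}d\theta$. Then there is no $\lambda\in\mathbb{C}$ with $\mathrm{Re}\,\lambda\ge 0$, $n(\lambda)\ne 0$, and $m(\lambda)/n(\lambda)$ equal to a real number $-\delta$ with $\delta\ge c_0$. -/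
open MeasureTheory Set

lemma aux_norm_int_le (r : ℝ) (hr : 0 < r) (lam : ℂ) (hlam : 0 ≤ lam.re)
    (f : ℝ → ℝ) (hf : IntegrableOn f (Icc (-r) 0)) :
    ‖∫ θ in (-r)..(0:ℝ), (f θ : ℂ) * Complex.exp (lam * θ)‖ ≤
      ∫ θ in (-r)..(0:ℝ), |f θ| := by
  have hr' : (-r : ℝ) ≤ 0 := by linarith
  have hint : IntervalIntegrable (fun θ => |f θ|) volume (-r) 0 := by
    rw [intervalIntegrable_iff_integrableOn_Ioc_of_le hr']
    exact IntegrableOn.mono_set hf.abs Ioc_subset_Icc_self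
  have hbound : ∀ᵐ t ∂(volume.restrict (Set.uIoc (-r) (0:ℝ))),
      ‖(f t : ℂ) * Complex.exp (lam * t)‖ ≤ |f t| := by
    filter_upwards [ae_restrict_mem measurableSet_uIoc] with t ht
    rw [uIoc_of_le hr'] at ht
    rw [norm_mul, Complex.norm_exp,
      Complex.norm_real, Real.norm_eq_abs]
    have h1 : (lam * (t:ℂ)).re = lam.re * t := by simp [Complex.mul_re]
    rw [h1]
    have h2 : Real.exp (lam.re * t) ≤ 1 :=
      Real.exp_le_one_iff.mpr (mul_nonpos_of_nonneg_of_nonpos hlam ht.2)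
    exact mul_le_of_le_one_right (abs_nonneg _) h2
  have h := intervalIntegral.norm_integral_le_abs_of_norm_le hbound hint
  rwa [abs_of_nonneg (intervalIntegral.integral_nonneg hr' fun t _ => abs_nonneg _)] at h

/-- with `m(λ) = λ(1 - ∫ γ e^{λθ})` and
`n(λ) = 1 - ∫ γ e^{λθ} + ∫ β e^{λθ}`, under `‖γ‖_{L¹} + ‖β‖_{L¹} < 1`, there is no
`λ` in the closed right half plane with `n(λ) ≠ 0` and `m(λ)/n(λ) = -δ` for a real
`δ ≥ c₀`. -/
theorem stmt_7
    (r c₀ : ℝ) (hr : 0 < r) (hc₀ : 0 < c₀)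
    (γ β : ℝ → ℝ)
    (hγ : IntegrableOn γ (Icc (-r) 0))
    (hβ : IntegrableOn β (Icc (-r) 0))
    (hsmall : (∫ θ in (-r)..(0:ℝ), |γ θ|) + ∫ θ in (-r)..(0:ℝ), |β θ| < 1) :
    ¬ ∃ (lam : ℂ) (δ : ℝ), 0 ≤ lam.re ∧ c₀ ≤ δ ∧
      (1 - (∫ θ in (-r)..(0:ℝ), (γ θ : ℂ) * Complex.exp (lam * θ))
        + ∫ θ in (-r)..(0:ℝ), (β θ : ℂ) * Complex.exp (lam * θ)) ≠ 0 ∧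
      (lam * (1 - ∫ θ in (-r)..(0:ℝ), (γ θ : ℂ) * Complex.exp (lam * θ))) /
        (1 - (∫ θ in (-r)..(0:ℝ), (γ θ : ℂ) * Complex.exp (lam * θ))
          + ∫ θ in (-r)..(0:ℝ), (β θ : ℂ) * Complex.exp (lam * θ)) = (-δ : ℝ) := by
  rintro ⟨lam, δ, hre, hδ, hn, heq⟩
  set G := ∫ θ in (-r)..(0:ℝ), (γ θ : ℂ) * Complex.exp (lam * θ) with hGdef
  set B := ∫ θ in (-r)..(0:ℝ), (β θ : ℂ) * Complex.exp (lam * θ) with hBdef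
  have hδ0 : (0:ℝ) < δ := lt_of_lt_of_le hc₀ hδ
  have hm : lam * (1 - G) = ((-δ : ℝ) : ℂ) * (1 - G + B) := (div_eq_iff hn).mp heq
  have key : (lam + (δ:ℂ)) * (1 - G) = -(δ:ℂ) * B := by
    push_cast at hm ⊢
    linear_combination hm
  have h1 : ‖lam + (δ:ℂ)‖ * ‖1 - G‖ = δ * ‖B‖ := by
    have := congrArg norm key
    rwa [norm_mul, norm_mul, norm_neg, Complex.norm_real, Real.norm_eq_abs,
      abs_of_pos hδ0] at this
  have h2 : δ ≤ ‖lam + (δ:ℂ)‖ := by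
    have h := Complex.re_le_norm (lam + (δ:ℂ))
    simp only [Complex.add_re, Complex.ofReal_re] at h
    linarith
  have hG : ‖G‖ ≤ ∫ θ in (-r)..(0:ℝ), |γ θ| := aux_norm_int_le r hr lam hre γ hγ
  have hB : ‖B‖ ≤ ∫ θ in (-r)..(0:ℝ), |β θ| := aux_norm_int_le r hr lam hre β hβ
  have h3 : 1 - ∫ θ in (-r)..(0:ℝ), |γ θ| ≤ ‖1 - G‖ := by
    have := norm_sub_norm_le (1:ℂ) G
    rw [norm_one] at this
    linarith
  nlinarith [norm_nonneg (1 - G), norm_nonneg B,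
    mul_le_mul_of_nonneg_right h2 (norm_nonneg (1 - G)),
    mul_le_mul_of_nonneg_left h3 hδ0.le,
    mul_le_mul_of_nonneg_left hB hδ0.le]
end

section
/- Let $H$ be a separable Hilbert space, $\varepsilon>0$, and $x\in L^2_{loc}([-r,\infty),H)$ with $r>0$. For $t\ge 0$ let $x_t\in L^2([-r,0],H)$ be $x_t(\theta)=x(t+\theta)$. Then for every $\theta\in[-r,0]$, $\left(\int_0^\varepsilon x_s\,ds\right)(\theta)=\int_0^{\varepsilon+\theta}x(u)\,du-\int_0^{\theta}x(u)\,du$, and in particular the function $\theta\mapsto\left(\int_0^\varepsilon x_s\,ds\right)(\theta)$ belongs to $W^{1,2}([-r,0],H)$ with derivative $\theta\mapsto x(\varepsilon+\theta)-x(\theta)$. -/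
open MeasureTheory Set

/-- for locally square-integrable `x : [-r,∞) → H` and `ε > 0`,
the function `F(θ) = (∫₀^ε x_s ds)(θ) = ∫₀^ε x(s+θ) ds` satisfies
`F(θ) = ∫₀^{ε+θ} x(u) du - ∫₀^{θ} x(u) du` on `[-r,0]`, and `F` belongs to
`W^{1,2}([-r,0],H)` with derivative `θ ↦ x(ε+θ) - x(θ)` (membership expressed via
the fundamental-theorem representation with an `L²` derivative). -/
theorem stmt_13
    {H : Type*} [NormedAddCommGroup H] [InnerProductSpace ℝ H] [CompleteSpace H]
    [SecondCountableTopology H]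
    (r ε : ℝ) (hr : 0 < r) (hε : 0 < ε)
    (x : ℝ → H)
    (hx : ∀ T : ℝ, 0 < T → MemLp x 2 (volume.restrict (Icc (-r) T))) :
    (∀ θ ∈ Icc (-r) (0:ℝ),
        (∫ s in (0:ℝ)..ε, x (s + θ))
          = (∫ u in (0:ℝ)..(ε + θ), x u) - ∫ u in (0:ℝ)..θ, x u) ∧
    MemLp (fun θ => x (ε + θ) - x θ) 2 (volume.restrict (Icc (-r) 0)) ∧
    (∀ θ ∈ Icc (-r) (0:ℝ),
        (∫ s in (0:ℝ)..ε, x (s + θ))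
          = (∫ s in (0:ℝ)..ε, x (s + (-r)))
            + ∫ u in (-r)..θ, (x (ε + u) - x u)) := by
  -- x is Memℒp 2 hence integrable on Icc (-r) ε
  have hmem : MemLp x 2 (volume.restrict (Icc (-r) ε)) := hx ε hε
  have hIcc : IntegrableOn x (Icc (-r) ε) volume := by
    have : MemLp x 1 (volume.restrict (Icc (-r) ε)) := by
      refine hmem.mono_exponent_of_measure_support_ne_top
        (s := Set.univ) (fun z hz => absurd trivial hz) ?_ (by norm_num)
      · simp [Measure.restrict_apply_univ]
    exact memLp_one_iff_integrable.mp this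
  -- interval integrability on subintervals of [-r, ε]
  have hII : ∀ a b : ℝ, a ∈ Icc (-r) ε → b ∈ Icc (-r) ε →
      IntervalIntegrable x volume a b := by
    intro a b ha hb
    exact (hIcc.mono_set (uIcc_subset_Icc ha hb)).intervalIntegrable
  have key : ∀ θ ∈ Icc (-r) (0:ℝ),
      (∫ s in (0:ℝ)..ε, x (s + θ))
        = (∫ u in (0:ℝ)..(ε + θ), x u) - ∫ u in (0:ℝ)..θ, x u := by
    intro θ hθ
    have hθ1 : θ ∈ Icc (-r) ε := ⟨hθ.1, hθ.2.trans hε.le⟩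
    have hθ2 : ε + θ ∈ Icc (-r) ε := ⟨by linarith [hθ.1, hε, hr], by linarith [hθ.2]⟩
    have h0 : (0:ℝ) ∈ Icc (-r) ε := ⟨by linarith, hε.le⟩
    rw [intervalIntegral.integral_comp_add_right, zero_add]
    rw [intervalIntegral.integral_interval_sub_left (hII 0 (ε + θ) h0 hθ2)
      (hII 0 θ h0 hθ1)]
  refine ⟨key, ?_, ?_⟩
  · -- MemLp of the derivative
    have h1 : MemLp x 2 (volume.restrict (Icc (-r) (0:ℝ))) :=
      hmem.mono_measure (Measure.restrict_mono (Icc_subset_Icc_right hε.le) le_rfl)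
    have h2 : MemLp x 2 (volume.restrict (Icc (ε - r) ε)) :=
      hmem.mono_measure (Measure.restrict_mono (Icc_subset_Icc_left (by linarith)) le_rfl)
    have hmp : MeasurePreserving (fun θ : ℝ => ε + θ)
        (volume.restrict (Icc (-r) (0:ℝ))) (volume.restrict (Icc (ε - r) ε)) := by
      have := (measurePreserving_add_left (volume : Measure ℝ) ε).restrict_preimage
        (s := Icc (ε - r) ε) measurableSet_Icc
      have hpre : (fun θ : ℝ => ε + θ) ⁻¹' Icc (ε - r) ε = Icc (-r) 0 := by
        rw [preimage_const_add_Icc]; ring_nf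
      rwa [hpre] at this
    have h3 : MemLp (fun θ => x (ε + θ)) 2 (volume.restrict (Icc (-r) (0:ℝ))) :=
      h2.comp_measurePreserving hmp
    exact h3.sub h1
  · intro θ hθ
    have hθ1 : θ ∈ Icc (-r) ε := ⟨hθ.1, hθ.2.trans hε.le⟩
    have hθ2 : ε + θ ∈ Icc (-r) ε := ⟨by linarith [hθ.1, hε, hr], by linarith [hθ.2]⟩
    have h0 : (0:ℝ) ∈ Icc (-r) ε := ⟨by linarith, hε.le⟩
    have hmr : (-r) ∈ Icc (-r) ε := ⟨le_rfl, by linarith⟩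
    have her : ε - r ∈ Icc (-r) ε := ⟨by linarith, by linarith⟩
    rw [key θ hθ, key (-r) ⟨le_rfl, by linarith⟩]
    have hsplit : (∫ u in (-r)..θ, (x (ε + u) - x u))
        = (∫ u in (-r)..θ, x (ε + u)) - ∫ u in (-r)..θ, x u := by
      refine intervalIntegral.integral_sub ?_ (hII (-r) θ hmr hθ1)
      have h := (hII (ε - r) (ε + θ) her hθ2).comp_add_left ε
      have e1 : ε - r - ε = -r := by ring
      have e2 : ε + θ - ε = θ := by ring
      rwa [e1, e2] at h
    rw [hsplit, intervalIntegral.integral_comp_add_left]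
    have e1 : ε + -r = ε - r := by ring
    rw [e1]
    have hadd1 : (∫ u in (0:ℝ)..(ε - r), x u) + (∫ u in (ε - r)..(ε + θ), x u)
        = ∫ u in (0:ℝ)..(ε + θ), x u :=
      intervalIntegral.integral_add_adjacent_intervals (hII 0 (ε - r) h0 her)
        (hII (ε - r) (ε + θ) her hθ2)
    have hadd2 : (∫ u in (0:ℝ)..(-r), x u) + (∫ u in (-r)..θ, x u)
        = ∫ u in (0:ℝ)..θ, x u :=
      intervalIntegral.integral_add_adjacent_intervals (hII 0 (-r) h0 hmr)
        (hII (-r) θ hmr hθ1)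
    have : ε + -r = ε - r := by ring
    rw [← hadd1, ← hadd2]
    abel
end
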